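/- Fix a training data set (E, λ) over d features and a decision tree T, and let x₀ ∈ ℝ be smaller than every feature value of every example. For a leaf v, Q[v, (l_i, r_i), k′] equals min(|{e ∈ E[(l_i, r_i)] : λ(e) = blue}|, |{e ∈ E[(l_i, r_i)] : λ(e) = red}|). For a cut v of T with feature j = feat(v), left child w and right child u, Q[v, (l_i, r_i), k′] equals the minimum of: (a) the minimum over β ∈ {0, …, k′} of Q[w, L(thr(v)), β] + Q[u, R(thr(v)), k′ − β]; and (b) if k′ ≥ 1, the minimum over β ∈ {0, …, k′ − 1} and x ∈ {e[j] : e ∈ E} ∪ {x₀} of Q[w, L(x), β] + Q[u, R(x), k′ − β − 1]; here L(x) denotes the threshold sequence obtained from (l_i, r_i) by replacing the j-th interval with (l_j, min(r_j, x)], and R(x) the one obtained by replacing the j-th interval with (max(l_j, x), r_j]. -/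

import Mathlib

/-- The two class labels. -/
def blue : Bool := true

def red : Bool := false

/-- Decision trees with features of type `α`: each leaf carries a class label,
each internal node (a *cut*) carries a feature and a real threshold. -/
inductive DTree (α : Type) : Type
  | leaf (label : Bool) : DTree α
  | node (feat : α) (thr : ℝ) (left right : DTree α) : DTree α

namespace DTree

/-- The class that the tree assigns to the example `e`. -/
noncomputable def classify {α : Type} : DTree α → (α → ℝ) → Bool
  | leaf c, _ => c
  | node f x l r, e => if e f ≤ x then l.classify e else r.classify e

end DTree

/-- `T'` has the same shape as `T` and the same feature at every cut; thresholds and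
leaf labels may differ. -/
def SameShapeFeat {α : Type} : DTree α → DTree α → Prop
  | DTree.leaf _, DTree.leaf _ => True
  | DTree.node f _ l r, DTree.node f' _ l' r' =>
      f = f' ∧ SameShapeFeat l l' ∧ SameShapeFeat r r'
  | _, _ => False

/-- The number of cuts at which the thresholds of the two (same-shaped) trees
differ, i.e. the number of threshold adjustments performed. -/
noncomputable def adjCost {α : Type} : DTree α → DTree α → ℕ
  | DTree.node _ x l r, DTree.node _ x' l' r' =>
      (if x = x' then 0 else 1) + adjCost l l' + adjCost r r'
  | _, _ => 0

open Classical in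
/-- The box `E[(l_i, r_i)]` of a threshold sequence: the examples `e` with
`l i < e i ≤ r i` for every feature `i`. -/
noncomputable def box {d n : ℕ} (E : Fin n → Fin d → ℝ) (l r : Fin d → EReal) :
    Finset (Fin n) :=
  Finset.univ.filter
    (fun i => ∀ a : Fin d, l a < ((E i a : ℝ) : EReal) ∧ ((E i a : ℝ) : EReal) ≤ r a)

/-- Errors of `T` among the examples indexed by `S`. -/
noncomputable def errorCountOn {d n : ℕ} (E : Fin n → Fin d → ℝ)
    (lab : Fin n → Bool) (S : Finset (Fin n)) (T : DTree (Fin d)) : ℕ :=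
  (S.filter (fun i => T.classify (E i) ≠ lab i)).card

/-- `Q E lab T l r k'`: the minimum number of errors, on the family `E[(l, r)]`, of a
decision tree obtained from the subtree `T` by replacing the thresholds of at most `k'`
of its cuts by arbitrary real numbers and relabeling its leaves arbitrarily. -/
noncomputable def Q {d n : ℕ} (E : Fin n → Fin d → ℝ) (lab : Fin n → Bool)
    (T : DTree (Fin d)) (l r : Fin d → EReal) (k' : ℕ) : ℕ :=
  sInf {m : ℕ | ∃ T' : DTree (Fin d), SameShapeFeat T T' ∧ adjCost T T' ≤ k' ∧
    errorCountOn E lab (box E l r) T' = m}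

/-!
A modification of the cut `node j x w u` is a cut `node j x' w' u'` whose children are
modifications of `w` and `u`. Its errors on a box are those of `w'` on the examples of the box
with `e j ≤ x'` plus those of `u'` on the others, and its cost is that of the children plus one
if `x' ≠ x`. Only the partition of the examples induced by `x'` matters, and it is also induced
by the largest example value `≤ x'`, or by `x₀` if there is none.
-/

theorem Finset.exists_mem_insert_le_iff_le {α : Type*} [LinearOrder α] (s : Finset α) {x₀ : α}
    (hx₀ : ∀ z ∈ s, x₀ < z) (x : α) : ∃ y ∈ insert x₀ s, ∀ z ∈ s, z ≤ y ↔ z ≤ x := by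
  by_cases hne : (s.filter (· ≤ x)).Nonempty
  · obtain ⟨hy, hyx⟩ := Finset.mem_filter.mp (Finset.max'_mem _ hne)
    refine ⟨_, Finset.mem_insert_of_mem hy, fun z hz => ⟨fun h => h.trans hyx, fun h => ?_⟩⟩
    exact Finset.le_max' _ _ (Finset.mem_filter.mpr ⟨hz, h⟩)
  · refine ⟨x₀, Finset.mem_insert_self _ _, fun z hz => ⟨fun h => ?_, fun h => ?_⟩⟩
    · exact absurd (hx₀ z hz) h.not_gt
    · exact absurd ⟨z, Finset.mem_filter.mpr ⟨hz, h⟩⟩ hne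

namespace DTree

theorem sameShapeFeat_refl {α : Type} (T : DTree α) : SameShapeFeat T T := by
  induction T with
  | leaf => trivial
  | node _ _ _ _ ihl ihr => exact ⟨rfl, ihl, ihr⟩

theorem adjCost_self {α : Type} (T : DTree α) : adjCost T T = 0 := by
  induction T with
  | leaf => rfl
  | node _ _ _ _ ihl ihr => simp [adjCost, ihl, ihr]

end DTree

open Function

section Recurrence

variable {d n : ℕ} (E : Fin n → Fin d → ℝ) (lab : Fin n → Bool)

theorem box_update_min (l r : Fin d → EReal) (j : Fin d) (y : ℝ) :
    box E l (update r j (min (r j) (y : EReal))) = (box E l r).filter (fun i => E i j ≤ y) := by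
  ext i
  simp only [box, Finset.mem_filter, Finset.mem_univ, true_and]
  constructor
  · intro h
    obtain ⟨hlj, hrj, hy⟩ : l j < E i j ∧ E i j ≤ r j ∧ E i j ≤ y := by simpa using h j
    refine ⟨fun a => ?_, hy⟩
    rcases eq_or_ne a j with rfl | ha
    · exact ⟨hlj, hrj⟩
    · simpa [ha] using h a
  · rintro ⟨h, hy⟩ a
    rcases eq_or_ne a j with rfl | ha
    · simpa [h a] using hy
    · simpa [ha] using h a

theorem box_update_max (l r : Fin d → EReal) (j : Fin d) (y : ℝ) :
    box E (update l j (max (l j) (y : EReal))) r = (box E l r).filter (fun i => ¬E i j ≤ y) := by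
  ext i
  simp only [box, Finset.mem_filter, Finset.mem_univ, true_and, not_le]
  constructor
  · intro h
    obtain ⟨⟨hlj, hy⟩, hrj⟩ : (l j < E i j ∧ y < E i j) ∧ E i j ≤ r j := by simpa using h j
    refine ⟨fun a => ?_, hy⟩
    rcases eq_or_ne a j with rfl | ha
    · exact ⟨hlj, hrj⟩
    · simpa [ha] using h a
  · rintro ⟨h, hy⟩ a
    rcases eq_or_ne a j with rfl | ha
    · simpa [h a] using hy
    · simpa [ha] using h a

theorem errorCountOn_leaf (S : Finset (Fin n)) (b : Bool) :
    errorCountOn E lab S (DTree.leaf b) = (S.filter fun i => lab i = !b).card := by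
  unfold errorCountOn
  congr 1
  refine Finset.filter_congr fun i _ => ?_
  cases lab i <;> cases b <;> simp [DTree.classify]

theorem errorCountOn_node (S : Finset (Fin n)) (j : Fin d) (x : ℝ) (w u : DTree (Fin d)) :
    errorCountOn E lab S (DTree.node j x w u) =
      errorCountOn E lab (S.filter fun i => E i j ≤ x) w
        + errorCountOn E lab (S.filter fun i => ¬E i j ≤ x) u := by
  unfold errorCountOn
  rw [← Finset.card_filter_add_card_filter_not (p := fun i => E i j ≤ x)]
  congr 1 <;> congr 1 <;> ext i <;> simp only [Finset.mem_filter] <;> by_cases h : E i j ≤ x <;>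
    simp [DTree.classify, h]

theorem Q_le_errorCountOn {T T' : DTree (Fin d)} (l r : Fin d → EReal) {k : ℕ}
    (hshape : SameShapeFeat T T') (hcost : adjCost T T' ≤ k) :
    Q E lab T l r k ≤ errorCountOn E lab (box E l r) T' :=
  Nat.sInf_le ⟨T', hshape, hcost, rfl⟩

theorem exists_errorCountOn_eq_Q (T : DTree (Fin d)) (l r : Fin d → EReal) (k : ℕ) :
    ∃ T', SameShapeFeat T T' ∧ adjCost T T' ≤ k ∧
      errorCountOn E lab (box E l r) T' = Q E lab T l r k := by
  have hne : {m | ∃ T', SameShapeFeat T T' ∧ adjCost T T' ≤ k ∧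
      errorCountOn E lab (box E l r) T' = m}.Nonempty :=
    ⟨_, T, T.sameShapeFeat_refl, by simp [T.adjCost_self], rfl⟩
  exact Nat.sInf_mem hne

theorem Q_leaf (c : Bool) (l r : Fin d → EReal) (k : ℕ) :
    Q E lab (DTree.leaf c) l r k =
      min ((box E l r).filter (fun i => lab i = blue)).card
        ((box E l r).filter (fun i => lab i = red)).card := by
  apply le_antisymm
  · refine le_min ?_ ?_
    · have h := Q_le_errorCountOn E lab l r (T := .leaf c) (T' := .leaf red) trivial k.zero_le
      rwa [errorCountOn_leaf] at h
    · have h := Q_le_errorCountOn E lab l r (T := .leaf c) (T' := .leaf blue) trivial k.zero_le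
      rwa [errorCountOn_leaf] at h
  · obtain ⟨T', hshape, -, hT'⟩ := exists_errorCountOn_eq_Q E lab (.leaf c) l r k
    cases T' with
    | node => exact hshape.elim
    | leaf b =>
      rw [← hT', errorCountOn_leaf]
      cases b
      exacts [min_le_left _ _, min_le_right _ _]

/-- `Q[w, L(y), β] + Q[u, R(y), γ]` in the notation of the recurrence. -/
noncomputable def Qsplit (w u : DTree (Fin d)) (l r : Fin d → EReal) (j : Fin d) (y : ℝ)
    (β γ : ℕ) : ℕ :=
  Q E lab w l (update r j (min (r j) (y : EReal))) β +
    Q E lab u (update l j (max (l j) (y : EReal))) r γ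

theorem Q_node_le_Qsplit {j : Fin d} {x : ℝ} {w u : DTree (Fin d)} (l r : Fin d → EReal)
    {k β γ : ℕ} (y : ℝ) (hcost : (if x = y then 0 else 1) + β + γ ≤ k) :
    Q E lab (.node j x w u) l r k ≤ Qsplit E lab w u l r j y β γ := by
  obtain ⟨w', hw, hwβ, hw'⟩ := exists_errorCountOn_eq_Q E lab w l (update r j (min (r j) y)) β
  obtain ⟨u', hu, huγ, hu'⟩ := exists_errorCountOn_eq_Q E lab u (update l j (max (l j) y)) r γ
  calc Q E lab (.node j x w u) l r k
      ≤ errorCountOn E lab (box E l r) (.node j y w' u') :=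
        Q_le_errorCountOn E lab l r ⟨rfl, hw, hu⟩ (by simp only [adjCost]; omega)
    _ = Qsplit E lab w u l r j y β γ := by
        rw [errorCountOn_node, ← box_update_min, ← box_update_max, hw', hu', Qsplit]

theorem Qsplit_le_errorCountOn_node {j : Fin d} {x y : ℝ} {w u w' u' : DTree (Fin d)}
    (l r : Fin d → EReal) {β γ : ℕ} (hw : SameShapeFeat w w') (hu : SameShapeFeat u u')
    (hβ : adjCost w w' ≤ β) (hγ : adjCost u u' ≤ γ) (hsplit : ∀ i, E i j ≤ y ↔ E i j ≤ x) :
    Qsplit E lab w u l r j y β γ ≤ errorCountOn E lab (box E l r) (.node j x w' u') := by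
  have hleft : box E l (update r j (min (r j) y)) = (box E l r).filter (E · j ≤ x) := by
    rw [box_update_min]
    exact Finset.filter_congr fun i _ => hsplit i
  have hright : box E (update l j (max (l j) y)) r = (box E l r).filter (¬E · j ≤ x) := by
    rw [box_update_max]
    exact Finset.filter_congr fun i _ => not_congr (hsplit i)
  rw [errorCountOn_node, ← hleft, ← hright]
  exact add_le_add (Q_le_errorCountOn E lab _ _ hw hβ) (Q_le_errorCountOn E lab _ _ hu hγ)

theorem exists_Qsplit_le_Q_node {x₀ : ℝ} (hx₀ : ∀ i j, x₀ < E i j) (j : Fin d) (x : ℝ)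
    (w u : DTree (Fin d)) (l r : Fin d → EReal) (k : ℕ) :
    ∃ β, (β ≤ k ∧ Qsplit E lab w u l r j x β (k - β) ≤ Q E lab (.node j x w u) l r k) ∨
      (β + 1 ≤ k ∧ ∃ y ∈ insert x₀ (Finset.univ.image fun i => E i j),
        Qsplit E lab w u l r j y β (k - β - 1) ≤ Q E lab (.node j x w u) l r k) := by
  obtain ⟨T', hshape, hcost, hT'⟩ := exists_errorCountOn_eq_Q E lab (.node j x w u) l r k
  cases T' with
  | leaf => exact hshape.elim
  | node j' x' w' u' =>
    obtain ⟨rfl, hw, hu⟩ := hshape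
    simp only [adjCost] at hcost
    rw [← hT']
    refine ⟨adjCost w w', ?_⟩
    split_ifs at hcost with hx
    · subst hx
      exact .inl ⟨by omega,
        Qsplit_le_errorCountOn_node E lab l r hw hu le_rfl (by omega) fun _ => Iff.rfl⟩
    · obtain ⟨y, hy, hsplit⟩ := (Finset.univ.image fun i => E i j).exists_mem_insert_le_iff_le
        (by simpa using fun i => hx₀ i j) x'
      exact .inr ⟨by omega, y, hy, Qsplit_le_errorCountOn_node E lab l r hw hu le_rfl (by omega)
        fun i => hsplit _ (Finset.mem_image_of_mem _ (Finset.mem_univ i))⟩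

end Recurrence

theorem stmt8_general {d n : ℕ} (E : Fin n → Fin d → ℝ) (lab : Fin n → Bool)
    (x₀ : ℝ) (hx₀ : ∀ (i : Fin n) (j : Fin d), x₀ < E i j)
    (l r : Fin d → EReal) (k' : ℕ) :
    (∀ c : Bool, Q E lab (DTree.leaf c) l r k' =
      min ((box E l r).filter (fun i => lab i = blue)).card
        ((box E l r).filter (fun i => lab i = red)).card) ∧
    (∀ (j : Fin d) (x : ℝ) (w u : DTree (Fin d)),
      Q E lab (DTree.node j x w u) l r k' =
        sInf (
          {m : ℕ | ∃ β ≤ k',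
            m = Q E lab w l (Function.update r j (min (r j) ((x : ℝ) : EReal))) β
              + Q E lab u (Function.update l j (max (l j) ((x : ℝ) : EReal))) r
                  (k' - β)}
          ∪ {m : ℕ | ∃ β, β + 1 ≤ k' ∧
            ∃ y ∈ insert x₀ (Finset.univ.image (fun i : Fin n => E i j)),
              m = Q E lab w l (Function.update r j (min (r j) ((y : ℝ) : EReal))) β
                + Q E lab u (Function.update l j (max (l j) ((y : ℝ) : EReal))) r
                    (k' - β - 1)})) := by
  refine ⟨fun c => Q_leaf E lab c l r k', fun j x w u => le_antisymm ?_ ?_⟩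
  · refine le_csInf ⟨_, Or.inl ⟨0, k'.zero_le, rfl⟩⟩ ?_
    rintro m (⟨β, hβ, rfl⟩ | ⟨β, hβ, y, -, rfl⟩)
    · exact Q_node_le_Qsplit E lab l r x (by rw [if_pos rfl]; omega)
    · exact Q_node_le_Qsplit E lab l r y (by split_ifs <;> omega)
  · obtain ⟨β, ⟨hβ, hle⟩ | ⟨hβ, y, hy, hle⟩⟩ := exists_Qsplit_le_Q_node E lab hx₀ j x w u l r k'
    · exact (Nat.sInf_le (Or.inl ⟨β, hβ, rfl⟩)).trans hle
    · exact (Nat.sInf_le (Or.inr ⟨β, hβ, y, hy, rfl⟩)).trans hle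

/-- The dynamic-programming recurrence for `Q`. For a leaf, `Q` is the
minimum of the numbers of blue and red examples in the box. For a cut with feature `j`,
threshold `x`, left child `w` and right child `u`, `Q` is the minimum of (a) splitting
the budget while keeping the threshold `x`, and (b) (if `k' ≥ 1`) splitting the budget
and adjusting the threshold to some value in `{e j : e ∈ E} ∪ {x₀}`; the left child is
evaluated on the box with `r j` replaced by `min (r j) x`, and the right child on the
box with `l j` replaced by `max (l j) x`. -/
theorem stmt8 {d n : ℕ} (E : Fin n → Fin d → ℝ) (lab : Fin n → Bool)
    (x₀ : ℝ) (hx₀ : ∀ (i : Fin n) (j : Fin d), x₀ < E i j)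
    (l r : Fin d → EReal) (hlr : ∀ a : Fin d, l a ≤ r a) (k' : ℕ) :
    (∀ c : Bool, Q E lab (DTree.leaf c) l r k' =
      min ((box E l r).filter (fun i => lab i = blue)).card
        ((box E l r).filter (fun i => lab i = red)).card) ∧
    (∀ (j : Fin d) (x : ℝ) (w u : DTree (Fin d)),
      Q E lab (DTree.node j x w u) l r k' =
        sInf (
          {m : ℕ | ∃ β ≤ k',
            m = Q E lab w l (Function.update r j (min (r j) ((x : ℝ) : EReal))) β
              + Q E lab u (Function.update l j (max (l j) ((x : ℝ) : EReal))) r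
                  (k' - β)}
          ∪ {m : ℕ | ∃ β, β + 1 ≤ k' ∧
            ∃ y ∈ insert x₀ (Finset.univ.image (fun i : Fin n => E i j)),
              m = Q E lab w l (Function.update r j (min (r j) ((y : ℝ) : EReal))) β
                + Q E lab u (Function.update l j (max (l j) ((y : ℝ) : EReal))) r
                    (k' - β - 1)})) :=
  stmt8_general E lab x₀ hx₀ l r k'
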